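/- Let u be a classical solution of the forward problem, and write ‖F‖² := ∫₀^T ∫₀^ℓ F(x,t)² dx dt. Then the Kelvin–Voigt dissipation estimate 2κ₀ ∫₀^T ∫₀^ℓ (∂ₓₓ∂ₜu(x,t))² dx dt ≤ C_e² ‖F‖² holds, where C_e² := exp(T/ρ₀). -/

import Mathlib

open Set

/-- A classical solution of the forward problem for the damped Euler–Bernoulli beam
equation `ρ_A(x) uₜₜ + μ(x) uₜ − (T_r(x) uₓ)ₓ + (r(x) uₓₓ + κ(x) uₓₓₜ)ₓₓ = F(x,t)` on
`(0,ℓ) × (0,T)`, with homogeneous initial conditions and simply supported boundary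
conditions.  The fields `ux, uxx, ut, utt, uxt, uxxt` are the partial derivatives of
`u`, `Ax` is the spatial derivative of `T_r(x) uₓ`, and `Bx, Bxx` are the first and
second spatial derivatives of the bending moment `B(x,t) = r(x) uₓₓ + κ(x) uₓₓₜ`. -/
structure ForwardSol (ℓ T : ℝ) (ρA μ Tr r κ : ℝ → ℝ) (F : ℝ → ℝ → ℝ) where
  u : ℝ → ℝ → ℝ
  ux : ℝ → ℝ → ℝ
  uxx : ℝ → ℝ → ℝ
  ut : ℝ → ℝ → ℝ
  utt : ℝ → ℝ → ℝ
  uxt : ℝ → ℝ → ℝ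
  uxxt : ℝ → ℝ → ℝ
  Ax : ℝ → ℝ → ℝ
  Bx : ℝ → ℝ → ℝ
  Bxx : ℝ → ℝ → ℝ
  smooth : ContDiffOn ℝ (⊤ : ℕ∞) (fun p : ℝ × ℝ => u p.1 p.2) (Icc 0 ℓ ×ˢ Icc 0 T)
  hux : ∀ x ∈ Icc (0:ℝ) ℓ, ∀ t ∈ Icc (0:ℝ) T, HasDerivAt (fun y => u y t) (ux x t) x
  huxx : ∀ x ∈ Icc (0:ℝ) ℓ, ∀ t ∈ Icc (0:ℝ) T, HasDerivAt (fun y => ux y t) (uxx x t) x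
  hut : ∀ x ∈ Icc (0:ℝ) ℓ, ∀ t ∈ Icc (0:ℝ) T, HasDerivAt (fun s => u x s) (ut x t) t
  hutt : ∀ x ∈ Icc (0:ℝ) ℓ, ∀ t ∈ Icc (0:ℝ) T, HasDerivAt (fun s => ut x s) (utt x t) t
  huxt : ∀ x ∈ Icc (0:ℝ) ℓ, ∀ t ∈ Icc (0:ℝ) T, HasDerivAt (fun s => ux x s) (uxt x t) t
  huxxt : ∀ x ∈ Icc (0:ℝ) ℓ, ∀ t ∈ Icc (0:ℝ) T, HasDerivAt (fun s => uxx x s) (uxxt x t) t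
  hAx : ∀ x ∈ Icc (0:ℝ) ℓ, ∀ t ∈ Icc (0:ℝ) T,
    HasDerivAt (fun y => Tr y * ux y t) (Ax x t) x
  hBx : ∀ x ∈ Icc (0:ℝ) ℓ, ∀ t ∈ Icc (0:ℝ) T,
    HasDerivAt (fun y => r y * uxx y t + κ y * uxxt y t) (Bx x t) x
  hBxx : ∀ x ∈ Icc (0:ℝ) ℓ, ∀ t ∈ Icc (0:ℝ) T, HasDerivAt (fun y => Bx y t) (Bxx x t) x
  cont_ux : ContinuousOn (fun p : ℝ × ℝ => ux p.1 p.2) (Icc 0 ℓ ×ˢ Icc 0 T)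
  cont_uxx : ContinuousOn (fun p : ℝ × ℝ => uxx p.1 p.2) (Icc 0 ℓ ×ˢ Icc 0 T)
  cont_ut : ContinuousOn (fun p : ℝ × ℝ => ut p.1 p.2) (Icc 0 ℓ ×ˢ Icc 0 T)
  cont_utt : ContinuousOn (fun p : ℝ × ℝ => utt p.1 p.2) (Icc 0 ℓ ×ˢ Icc 0 T)
  cont_uxt : ContinuousOn (fun p : ℝ × ℝ => uxt p.1 p.2) (Icc 0 ℓ ×ˢ Icc 0 T)
  cont_uxxt : ContinuousOn (fun p : ℝ × ℝ => uxxt p.1 p.2) (Icc 0 ℓ ×ˢ Icc 0 T)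
  cont_Ax : ContinuousOn (fun p : ℝ × ℝ => Ax p.1 p.2) (Icc 0 ℓ ×ˢ Icc 0 T)
  cont_Bx : ContinuousOn (fun p : ℝ × ℝ => Bx p.1 p.2) (Icc 0 ℓ ×ˢ Icc 0 T)
  cont_Bxx : ContinuousOn (fun p : ℝ × ℝ => Bxx p.1 p.2) (Icc 0 ℓ ×ˢ Icc 0 T)
  pde : ∀ x ∈ Ioo (0:ℝ) ℓ, ∀ t ∈ Ioo (0:ℝ) T,
    ρA x * utt x t + μ x * ut x t - Ax x t + Bxx x t = F x t
  init_u : ∀ x ∈ Ioo (0:ℝ) ℓ, u x 0 = 0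
  init_ut : ∀ x ∈ Ioo (0:ℝ) ℓ, ut x 0 = 0
  bc_u0 : ∀ t ∈ Icc (0:ℝ) T, u 0 t = 0
  bc_ul : ∀ t ∈ Icc (0:ℝ) T, u ℓ t = 0
  bc_m0 : ∀ t ∈ Icc (0:ℝ) T, r 0 * uxx 0 t + κ 0 * uxxt 0 t = 0
  bc_ml : ∀ t ∈ Icc (0:ℝ) T, r ℓ * uxx ℓ t + κ ℓ * uxxt ℓ t = 0

/-!
Multiplying the equation by `∂ₜu` and integrating by parts in `x` (the simply supported boundary
conditions kill every boundary term) gives the energy identity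
`E' = 2 ∫ F uₜ - 2 ∫ μ uₜ² - 2 ∫ κ uₓₓₜ²` for `E = ∫ ρ_A uₜ² + T_r uₓ² + r uₓₓ²`, with `E(0) = 0`.
Since `2 F uₜ ≤ uₜ² + F² ≤ ρ_A uₜ² / ρ₀ + F²`, this yields
`E(t) + 2κ₀ ∫₀ᵗ ‖uₓₓₜ‖² ≤ ∫₀ᵗ (E / ρ₀ + ‖F‖²)`. Dropping the dissipation term, Gronwall's
inequality in integral form bounds the right-hand side at `t = T` by `exp (T / ρ₀) ‖F‖²`; dropping
`E(T) ≥ 0` instead gives the estimate.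
-/

open Filter Topology MeasureTheory intervalIntegral Function

section PartialDerivatives

variable {W wx wt : ℝ → ℝ → ℝ} {O : Set (ℝ × ℝ)}

theorem HasFDerivAt.hasDerivAt_slice_fst {U : ℝ × ℝ → ℝ} {L : ℝ × ℝ →L[ℝ] ℝ} {x t : ℝ}
    (h : HasFDerivAt U L (x, t)) : HasDerivAt (fun y => U (y, t)) (L (1, 0)) x :=
  h.comp_hasDerivAt x ((hasDerivAt_id x).prodMk (hasDerivAt_const x t))

theorem HasFDerivAt.hasDerivAt_slice_snd {U : ℝ × ℝ → ℝ} {L : ℝ × ℝ →L[ℝ] ℝ} {x t : ℝ}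
    (h : HasFDerivAt U L (x, t)) : HasDerivAt (fun s => U (x, s)) (L (0, 1)) t :=
  h.comp_hasDerivAt t ((hasDerivAt_const t x).prodMk (hasDerivAt_id t))

theorem contDiffOn_of_hasDerivAt_slice_fst {m n : WithTop ℕ∞} (hO : IsOpen O)
    (hW : ContDiffOn ℝ n (uncurry W) O) (hmn : m + 1 ≤ n)
    (hwx : ∀ p ∈ O, HasDerivAt (W · p.2) (wx p.1 p.2) p.1) :
    ContDiffOn ℝ m (uncurry wx) O :=
  ((hW.fderiv_of_isOpen hO hmn).clm_apply contDiffOn_const).congr fun p hp =>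
    (hwx p hp).unique ((hW.contDiffAt (hO.mem_nhds hp)).differentiableAt
      (by rintro rfl; simp at hmn)).hasFDerivAt.hasDerivAt_slice_fst

/-- Schwarz's theorem, for partial derivatives given as derivatives of slices. -/
theorem hasDerivAt_slice_fst_of_hasDerivAt_slice_snd (hO : IsOpen O)
    (hW : ContDiffOn ℝ 2 (uncurry W) O)
    (hwx : ∀ p ∈ O, HasDerivAt (W · p.2) (wx p.1 p.2) p.1)
    (hwt : ∀ p ∈ O, HasDerivAt (W p.1 ·) (wt p.1 p.2) p.2)
    {x t c : ℝ} (hp : (x, t) ∈ O) (hc : HasDerivAt (wx x ·) c t) :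
    HasDerivAt (wt · t) c x := by
  set D := fderiv ℝ (uncurry W)
  have hD : ∀ p ∈ O, HasFDerivAt (uncurry W) (D p) p := fun p hp =>
    ((hW.contDiffAt (hO.mem_nhds hp)).differentiableAt (by norm_num)).hasFDerivAt
  have hD2 : DifferentiableAt ℝ D (x, t) :=
    ((hW.fderiv_of_isOpen hO (m := 1) le_rfl).contDiffAt (hO.mem_nhds hp)).differentiableAt
      one_ne_zero
  have hsymm := (hW.contDiffAt (hO.mem_nhds hp)).isSymmSndFDerivAt (by simp) (1, 0) (0, 1)
  have hDv : ∀ v, HasFDerivAt (fun p => D p v)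
      ((ContinuousLinearMap.apply ℝ ℝ v).comp (fderiv ℝ D (x, t))) (x, t) := fun v =>
    (ContinuousLinearMap.apply ℝ ℝ v).hasFDerivAt.comp _ hD2.hasFDerivAt
  have hx : (fun s => D (x, s) (1, 0)) =ᶠ[𝓝 t] (wx x ·) := by
    filter_upwards [(continuous_const.prodMk continuous_id).continuousAt.preimage_mem_nhds
      (hO.mem_nhds hp)] with s hs
    exact ((hwx (x, s) hs).unique (hD _ hs).hasDerivAt_slice_fst).symm
  have ht : (fun y => D (y, t) (0, 1)) =ᶠ[𝓝 x] (wt · t) := by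
    filter_upwards [(continuous_id.prodMk continuous_const).continuousAt.preimage_mem_nhds
      (hO.mem_nhds hp)] with y hy
    exact ((hwt (y, t) hy).unique (hD _ hy).hasDerivAt_slice_snd).symm
  rw [hc.unique ((hDv (1, 0)).hasDerivAt_slice_snd.congr_of_eventuallyEq hx.symm)]
  exact ((hDv (0, 1)).hasDerivAt_slice_fst.congr_of_eventuallyEq ht.symm).congr_deriv hsymm

end PartialDerivatives

section ParametricIntegrals

variable {f f' : ℝ → ℝ → ℝ} {a b : ℝ} {s : Set ℝ}

theorem continuousOn_intervalIntegral_of_continuousOn_prod (hab : a ≤ b) (hs : IsCompact s)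
    (hf : ContinuousOn (fun p : ℝ × ℝ => f p.1 p.2) (Icc a b ×ˢ s)) :
    ContinuousOn (fun t => ∫ x in a..b, f x t) s := by
  obtain ⟨C, hC⟩ := (isCompact_Icc.prod hs).exists_bound_of_continuousOn hf
  simp only [integral_of_le hab]
  refine continuousOn_of_dominated (bound := fun _ => C) (fun t ht => ?_) (fun t ht => ?_)
    (integrable_const C) ?_
  · exact ((hf.uncurry_right t ht).mono Ioc_subset_Icc_self).aestronglyMeasurable
      measurableSet_Ioc
  · exact (ae_restrict_iff' measurableSet_Ioc).2 <| ae_of_all _ fun x hx =>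
      hC (x, t) ⟨Ioc_subset_Icc_self hx, ht⟩
  · exact (ae_restrict_iff' measurableSet_Ioc).2 <| ae_of_all _ fun x hx =>
      hf.uncurry_left x (Ioc_subset_Icc_self hx)

theorem hasDerivAt_intervalIntegral_of_continuousOn_prod (hab : a ≤ b) (hs : IsCompact s)
    (hf : ContinuousOn (fun p : ℝ × ℝ => f p.1 p.2) (Icc a b ×ˢ s))
    (hf' : ContinuousOn (fun p : ℝ × ℝ => f' p.1 p.2) (Icc a b ×ˢ s))
    (hd : ∀ x ∈ Icc a b, ∀ t ∈ s, HasDerivAt (f x ·) (f' x t) t)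
    {t₀ : ℝ} (ht₀ : s ∈ 𝓝 t₀) :
    HasDerivAt (fun t => ∫ x in a..b, f x t) (∫ x in a..b, f' x t₀) t₀ := by
  obtain ⟨C, hC⟩ := (isCompact_Icc.prod hs).exists_bound_of_continuousOn hf'
  have ht₀s : t₀ ∈ s := mem_of_mem_nhds ht₀
  have hmeas : ∀ g : ℝ → ℝ → ℝ, ContinuousOn (fun p : ℝ × ℝ => g p.1 p.2) (Icc a b ×ˢ s) →
      ∀ t ∈ s, AEStronglyMeasurable (g · t) (volume.restrict (uIoc a b)) := fun g hg t ht => by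
    rw [uIoc_of_le hab]
    exact ((hg.uncurry_right t ht).mono Ioc_subset_Icc_self).aestronglyMeasurable
      measurableSet_Ioc
  refine (hasDerivAt_integral_of_dominated_loc_of_deriv_le (F := fun t x => f x t)
    (F' := fun t x => f' x t) (bound := fun _ => C) ht₀
    (eventually_of_mem ht₀ (hmeas f hf)) ((hf.uncurry_right t₀ ht₀s).intervalIntegrable_of_Icc hab)
    (hmeas f' hf' t₀ ht₀s) ?_ intervalIntegrable_const ?_).2
  · refine ae_of_all _ fun x hx t ht => hC (x, t) ⟨?_, ht⟩
    rw [uIoc_of_le hab] at hx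
    exact Ioc_subset_Icc_self hx
  · refine ae_of_all _ fun x hx t ht => hd x ?_ t ht
    rw [uIoc_of_le hab] at hx
    exact Ioc_subset_Icc_self hx

end ParametricIntegrals

theorem ContinuousOn.hasDerivAt_integral_of_mem_Ioo {f : ℝ → ℝ} {a b t : ℝ}
    (hf : ContinuousOn f (Icc a b)) (ht : t ∈ Ioo a b) :
    HasDerivAt (fun s => ∫ u in a..s, f u) (f t) t :=
  integral_hasDerivAt_right
    ((hf.mono (Icc_subset_Icc le_rfl ht.2.le)).intervalIntegrable_of_Icc ht.1.le)
    ((hf.mono Ioo_subset_Icc_self).stronglyMeasurableAtFilter isOpen_Ioo t ht)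
    (hf.continuousAt (Icc_mem_nhds ht.1 ht.2))

/-- Gronwall's inequality in integral form. -/
theorem integral_le_exp_mul_integral_of_le_integral {E f : ℝ → ℝ} {a T : ℝ} (ha : 0 ≤ a)
    (hT : 0 ≤ T) (hE : ContinuousOn E (Icc 0 T)) (hf : ContinuousOn f (Icc 0 T))
    (hf₀ : ∀ t ∈ Icc 0 T, 0 ≤ f t) (hle : ∀ t ∈ Icc 0 T, E t ≤ ∫ s in 0..t, (a * E s + f s)) :
    ∫ s in 0..T, (a * E s + f s) ≤ Real.exp (a * T) * ∫ s in 0..T, f s := by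
  set I := fun t => ∫ s in 0..t, (a * E s + f s)
  have hq : ContinuousOn (fun s => a * E s + f s) (Icc 0 T) := (continuousOn_const.mul hE).add hf
  have hprim : ∀ {g : ℝ → ℝ}, ContinuousOn g (Icc 0 T) →
      ContinuousOn (fun t => ∫ s in 0..t, g s) (Icc 0 T) := fun hg => by
    simpa [uIcc_of_le hT] using continuousOn_primitive_interval' (hg.intervalIntegrable_of_Icc hT)
      (left_mem_uIcc : (0 : ℝ) ∈ uIcc 0 T)
  -- the derivative `exp (-a t) a (E t - I t) + (exp (-a t) - 1) f t` is nonpositive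
  have hanti : AntitoneOn (fun t => Real.exp (-a * t) * I t - ∫ s in 0..t, f s) (Icc 0 T) := by
    refine antitoneOn_of_hasDerivWithinAt_nonpos (convex_Icc 0 T)
      (((Real.continuous_exp.comp (continuous_const.mul continuous_id)).continuousOn.mul
        (hprim hq)).sub (hprim hf))
      (f' := fun t => Real.exp (-a * t) * (a * E t + f t) + Real.exp (-a * t) * (-a) * I t - f t)
      (fun t ht => ?_) (fun t ht => ?_) <;> rw [interior_Icc] at ht
    · have hexp : HasDerivAt (fun t => Real.exp (-a * t)) (Real.exp (-a * t) * (-a)) t := by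
        simpa using ((hasDerivAt_id t).const_mul (-a)).exp
      exact ((hexp.mul (hq.hasDerivAt_integral_of_mem_Ioo ht)).sub
        (hf.hasDerivAt_integral_of_mem_Ioo ht)).hasDerivWithinAt.congr_deriv (by ring)
    · have hexp_le : Real.exp (-a * t) ≤ 1 := Real.exp_le_one_iff.2 (by nlinarith [ht.1])
      have hEI := hle t (Ioo_subset_Icc_self ht)
      have hft := hf₀ t (Ioo_subset_Icc_self ht)
      nlinarith [mul_nonneg (mul_nonneg (Real.exp_pos (-a * t)).le ha) (sub_nonneg.2 hEI),
        mul_nonneg (sub_nonneg.2 hexp_le) hft]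
  have := hanti ⟨le_rfl, hT⟩ ⟨hT, le_rfl⟩ hT
  simp only [I, integral_same, mul_zero, sub_zero] at this
  calc I T = Real.exp (a * T) * (Real.exp (-a * T) * I T) := by
        rw [← mul_assoc, ← Real.exp_add]; simp
    _ ≤ Real.exp (a * T) * ∫ s in 0..T, f s := by
        gcongr; linarith

theorem HasDerivAt.eq_zero_of_eqOn_zero {g : ℝ → ℝ} {c t : ℝ} {s : Set ℝ}
    (hs : UniqueDiffOn ℝ s) (ht : t ∈ s) (hg : EqOn g 0 s) (h : HasDerivAt g c t) : c = 0 :=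
  (hs t ht).eq_deriv _ h.hasDerivWithinAt ((hasDerivWithinAt_const t s 0).congr hg (hg ht))

theorem integral_deriv_mul_eq_zero {u v u' v' : ℝ → ℝ} {a b : ℝ} (hab : a ≤ b)
    (hu : ContinuousOn u (Icc a b)) (hv : ContinuousOn v (Icc a b))
    (huu' : ∀ x ∈ Ioo a b, HasDerivAt u (u' x) x) (hvv' : ∀ x ∈ Ioo a b, HasDerivAt v (v' x) x)
    (hu' : IntervalIntegrable u' volume a b) (hv' : IntervalIntegrable v' volume a b)
    (ha : u a * v a = 0) (hb : u b * v b = 0) :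
    ∫ x in a..b, u' x * v x + u x * v' x = 0 := by
  rw [integral_deriv_mul_eq_sub_of_hasDerivAt (by rwa [uIcc_of_le hab])
    (by rwa [uIcc_of_le hab]) (by rwa [min_eq_left hab, max_eq_right hab])
    (by rwa [min_eq_left hab, max_eq_right hab]) hu' hv', ha, hb, sub_zero]

theorem forall_mem_Ioo_prod_of_forall_mem_Icc {P : ℝ → ℝ → Prop} {a b c d : ℝ}
    (h : ∀ x ∈ Icc a b, ∀ t ∈ Icc c d, P x t) : ∀ p ∈ Ioo a b ×ˢ Ioo c d, P p.1 p.2 :=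
  fun _ hp => h _ (Ioo_subset_Icc_self hp.1) _ (Ioo_subset_Icc_self hp.2)

attribute [fun_prop] ForwardSol.cont_ux ForwardSol.cont_uxx ForwardSol.cont_ut
  ForwardSol.cont_utt ForwardSol.cont_uxt ForwardSol.cont_uxxt ForwardSol.cont_Ax
  ForwardSol.cont_Bx ForwardSol.cont_Bxx

namespace ForwardSol

variable {ℓ T : ℝ} {ρA μ Tr r κ : ℝ → ℝ} {F : ℝ → ℝ → ℝ} (sol : ForwardSol ℓ T ρA μ Tr r κ F)
  {x t : ℝ}

theorem ux_initial_eq_zero (hT : 0 ≤ T) (hx : x ∈ Ioo 0 ℓ) : sol.ux x 0 = 0 :=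
  (sol.hux x (Ioo_subset_Icc_self hx) 0 ⟨le_rfl, hT⟩).eq_zero_of_eqOn_zero
    isOpen_Ioo.uniqueDiffOn hx sol.init_u

theorem uxx_initial_eq_zero (hT : 0 ≤ T) (hx : x ∈ Ioo 0 ℓ) : sol.uxx x 0 = 0 :=
  (sol.huxx x (Ioo_subset_Icc_self hx) 0 ⟨le_rfl, hT⟩).eq_zero_of_eqOn_zero
    isOpen_Ioo.uniqueDiffOn hx fun _ hy => sol.ux_initial_eq_zero hT hy

theorem ut_left_eq_zero (hℓ : 0 ≤ ℓ) (hT : 0 < T) (ht : t ∈ Icc 0 T) : sol.ut 0 t = 0 :=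
  (sol.hut 0 ⟨le_rfl, hℓ⟩ t ht).eq_zero_of_eqOn_zero (uniqueDiffOn_Icc hT) ht sol.bc_u0

theorem ut_right_eq_zero (hℓ : 0 ≤ ℓ) (hT : 0 < T) (ht : t ∈ Icc 0 T) : sol.ut ℓ t = 0 :=
  (sol.hut ℓ ⟨hℓ, le_rfl⟩ t ht).eq_zero_of_eqOn_zero (uniqueDiffOn_Icc hT) ht sol.bc_ul

theorem contDiffOn_Ioo_prod : ContDiffOn ℝ (⊤ : ℕ∞) (uncurry sol.u) (Ioo 0 ℓ ×ˢ Ioo 0 T) :=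
  sol.smooth.mono (prod_mono Ioo_subset_Icc_self Ioo_subset_Icc_self)

theorem hasDerivAt_ut_fst (hx : x ∈ Ioo 0 ℓ) (ht : t ∈ Ioo 0 T) :
    HasDerivAt (sol.ut · t) (sol.uxt x t) x :=
  hasDerivAt_slice_fst_of_hasDerivAt_slice_snd (isOpen_Ioo.prod isOpen_Ioo)
    (sol.contDiffOn_Ioo_prod.of_le (by norm_cast))
    (forall_mem_Ioo_prod_of_forall_mem_Icc sol.hux) (forall_mem_Ioo_prod_of_forall_mem_Icc sol.hut)
    ⟨hx, ht⟩ (sol.huxt x (Ioo_subset_Icc_self hx) t (Ioo_subset_Icc_self ht))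

theorem hasDerivAt_uxt_fst (hx : x ∈ Ioo 0 ℓ) (ht : t ∈ Ioo 0 T) :
    HasDerivAt (sol.uxt · t) (sol.uxxt x t) x :=
  hasDerivAt_slice_fst_of_hasDerivAt_slice_snd (isOpen_Ioo.prod isOpen_Ioo)
    (contDiffOn_of_hasDerivAt_slice_fst (isOpen_Ioo.prod isOpen_Ioo) sol.contDiffOn_Ioo_prod
      (by norm_cast) (forall_mem_Ioo_prod_of_forall_mem_Icc sol.hux))
    (forall_mem_Ioo_prod_of_forall_mem_Icc sol.huxx)
    (forall_mem_Ioo_prod_of_forall_mem_Icc sol.huxt)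
    ⟨hx, ht⟩ (sol.huxxt x (Ioo_subset_Icc_self hx) t (Ioo_subset_Icc_self ht))

theorem integral_energy_rate_eq (hμ : ContinuousOn μ (Icc 0 ℓ))
    (hTr : ContinuousOn Tr (Icc 0 ℓ)) (hr : ContinuousOn r (Icc 0 ℓ))
    (hκ : ContinuousOn κ (Icc 0 ℓ))
    (hF : ContinuousOn (fun p : ℝ × ℝ => F p.1 p.2) (Icc 0 ℓ ×ˢ Icc 0 T))
    (hℓ : 0 ≤ ℓ) (ht : t ∈ Ioo 0 T) :
    ∫ x in 0..ℓ, ρA x * sol.ut x t * sol.utt x t + Tr x * sol.ux x t * sol.uxt x t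
        + r x * sol.uxx x t * sol.uxxt x t
      = ∫ x in 0..ℓ, F x t * sol.ut x t - μ x * sol.ut x t ^ 2 - κ x * sol.uxxt x t ^ 2 := by
  have hT : 0 < T := ht.1.trans ht.2
  have htI : t ∈ Icc 0 T := Ioo_subset_Icc_self ht
  have := sol.cont_ux.uncurry_right t htI
  have := sol.cont_uxx.uncurry_right t htI
  have := sol.cont_ut.uncurry_right t htI
  have := sol.cont_utt.uncurry_right t htI
  have := sol.cont_uxt.uncurry_right t htI
  have := sol.cont_uxxt.uncurry_right t htI
  have := sol.cont_Ax.uncurry_right t htI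
  have := sol.cont_Bx.uncurry_right t htI
  have := sol.cont_Bxx.uncurry_right t htI
  have := hF.uncurry_right t htI
  have hx : ∀ {x}, x ∈ Ioo 0 ℓ → x ∈ Icc 0 ℓ := fun hx => Ioo_subset_Icc_self hx
  have htension : ∫ x in 0..ℓ, sol.Ax x t * sol.ut x t + Tr x * sol.ux x t * sol.uxt x t = 0 :=
    integral_deriv_mul_eq_zero hℓ (u := fun x => Tr x * sol.ux x t) (by fun_prop) (by fun_prop)
      (fun x hx' => sol.hAx x (hx hx') t htI) (fun x hx' => sol.hasDerivAt_ut_fst hx' ht)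
      ((by fun_prop : ContinuousOn _ _).intervalIntegrable_of_Icc hℓ)
      ((by fun_prop : ContinuousOn _ _).intervalIntegrable_of_Icc hℓ)
      (by simp [sol.ut_left_eq_zero hℓ hT htI]) (by simp [sol.ut_right_eq_zero hℓ hT htI])
  have hshear : ∫ x in 0..ℓ, sol.Bxx x t * sol.ut x t + sol.Bx x t * sol.uxt x t = 0 :=
    integral_deriv_mul_eq_zero hℓ (by fun_prop) (by fun_prop)
      (fun x hx' => sol.hBxx x (hx hx') t htI) (fun x hx' => sol.hasDerivAt_ut_fst hx' ht)
      ((by fun_prop : ContinuousOn _ _).intervalIntegrable_of_Icc hℓ)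
      ((by fun_prop : ContinuousOn _ _).intervalIntegrable_of_Icc hℓ)
      (by simp [sol.ut_left_eq_zero hℓ hT htI]) (by simp [sol.ut_right_eq_zero hℓ hT htI])
  have hbending : ∫ x in 0..ℓ, sol.Bx x t * sol.uxt x t
      + (r x * sol.uxx x t + κ x * sol.uxxt x t) * sol.uxxt x t = 0 :=
    integral_deriv_mul_eq_zero hℓ (u := fun x => r x * sol.uxx x t + κ x * sol.uxxt x t)
      (by fun_prop) (by fun_prop)
      (fun x hx' => sol.hBx x (hx hx') t htI) (fun x hx' => sol.hasDerivAt_uxt_fst hx' ht)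
      ((by fun_prop : ContinuousOn _ _).intervalIntegrable_of_Icc hℓ)
      ((by fun_prop : ContinuousOn _ _).intervalIntegrable_of_Icc hℓ)
      (by simp [sol.bc_m0 t htI]) (by simp [sol.bc_ml t htI])
  -- the equation times `uₜ`, rearranged as the dissipation terms plus three exact `x`-derivatives
  have hbalance : EqOn
      (fun x => ρA x * sol.ut x t * sol.utt x t + Tr x * sol.ux x t * sol.uxt x t
        + r x * sol.uxx x t * sol.uxxt x t)
      (fun x => (F x t * sol.ut x t - μ x * sol.ut x t ^ 2 - κ x * sol.uxxt x t ^ 2)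
        + (sol.Ax x t * sol.ut x t + Tr x * sol.ux x t * sol.uxt x t)
        - (sol.Bxx x t * sol.ut x t + sol.Bx x t * sol.uxt x t)
        + (sol.Bx x t * sol.uxt x t
          + (r x * sol.uxx x t + κ x * sol.uxxt x t) * sol.uxxt x t)) (Ioo 0 ℓ) :=
    fun x hx => by linear_combination (sol.ut x t) * sol.pde x hx t ht
  rw [integral_congr_Ioo_of_le hℓ hbalance, intervalIntegral.integral_add,
    intervalIntegral.integral_sub, intervalIntegral.integral_add,
    htension, hshear, hbending, add_zero, sub_zero, add_zero]
  all_goals exact ContinuousOn.intervalIntegrable_of_Icc hℓ (by fun_prop)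

/-- Twice the mechanical energy of the beam. -/
noncomputable def energy (t : ℝ) : ℝ :=
  ∫ x in 0..ℓ, ρA x * sol.ut x t ^ 2 + Tr x * sol.ux x t ^ 2 + r x * sol.uxx x t ^ 2

theorem continuousOn_energy (hρA : ContinuousOn ρA (Icc 0 ℓ)) (hTr : ContinuousOn Tr (Icc 0 ℓ))
    (hr : ContinuousOn r (Icc 0 ℓ)) (hℓ : 0 ≤ ℓ) : ContinuousOn sol.energy (Icc 0 T) :=
  continuousOn_intervalIntegral_of_continuousOn_prod hℓ isCompact_Icc
    (by fun_prop (disch := exact mapsTo_fst_prod))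

theorem energy_zero (hℓ : 0 ≤ ℓ) (hT : 0 ≤ T) : sol.energy 0 = 0 := by
  rw [energy, integral_congr_Ioo_of_le hℓ (g := 0) fun x hx => by
    simp [sol.init_ut x hx, sol.ux_initial_eq_zero hT hx, sol.uxx_initial_eq_zero hT hx]]
  simp

theorem energy_nonneg (hρA : ∀ x ∈ Icc 0 ℓ, 0 ≤ ρA x) (hTr : ∀ x ∈ Icc 0 ℓ, 0 ≤ Tr x)
    (hr : ∀ x ∈ Icc 0 ℓ, 0 ≤ r x) (hℓ : 0 ≤ ℓ) : 0 ≤ sol.energy t :=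
  integral_nonneg hℓ fun x hx => by
    have := hρA x hx; have := hTr x hx; have := hr x hx; positivity

theorem hasDerivAt_energy (hρA : ContinuousOn ρA (Icc 0 ℓ)) (hμ : ContinuousOn μ (Icc 0 ℓ))
    (hTr : ContinuousOn Tr (Icc 0 ℓ)) (hr : ContinuousOn r (Icc 0 ℓ))
    (hκ : ContinuousOn κ (Icc 0 ℓ))
    (hF : ContinuousOn (fun p : ℝ × ℝ => F p.1 p.2) (Icc 0 ℓ ×ˢ Icc 0 T))
    (hℓ : 0 ≤ ℓ) (ht : t ∈ Ioo 0 T) :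
    HasDerivAt sol.energy
      (2 * ∫ x in 0..ℓ, F x t * sol.ut x t - μ x * sol.ut x t ^ 2 - κ x * sol.uxxt x t ^ 2) t := by
  rw [← sol.integral_energy_rate_eq hμ hTr hr hκ hF hℓ ht, ← intervalIntegral.integral_const_mul]
  unfold energy
  refine hasDerivAt_intervalIntegral_of_continuousOn_prod (f' := fun x s => 2 *
      (ρA x * sol.ut x s * sol.utt x s + Tr x * sol.ux x s * sol.uxt x s
        + r x * sol.uxx x s * sol.uxxt x s)) hℓ isCompact_Icc
    (by fun_prop (disch := exact mapsTo_fst_prod)) (by fun_prop (disch := exact mapsTo_fst_prod))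
    (fun x hx s hs => ?_) (Icc_mem_nhds ht.1 ht.2)
  have h1 := ((sol.hutt x hx s hs).pow 2).const_mul (ρA x)
  have h2 := ((sol.huxt x hx s hs).pow 2).const_mul (Tr x)
  have h3 := ((sol.huxxt x hx s hs).pow 2).const_mul (r x)
  exact ((h1.add h2).add h3).congr_deriv (by push_cast; ring)

theorem two_mul_integral_power_sub_dissipation_le {ρ₀ κ₀ : ℝ} (hρ₀ : 0 < ρ₀)
    (hρA : ContinuousOn ρA (Icc 0 ℓ)) (hμ : ContinuousOn μ (Icc 0 ℓ))
    (hTr : ContinuousOn Tr (Icc 0 ℓ)) (hr : ContinuousOn r (Icc 0 ℓ))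
    (hκ : ContinuousOn κ (Icc 0 ℓ))
    (hF : ContinuousOn (fun p : ℝ × ℝ => F p.1 p.2) (Icc 0 ℓ ×ˢ Icc 0 T))
    (hρAb : ∀ x ∈ Icc 0 ℓ, ρ₀ ≤ ρA x) (hμb : ∀ x ∈ Icc 0 ℓ, 0 ≤ μ x)
    (hTrb : ∀ x ∈ Icc 0 ℓ, 0 ≤ Tr x) (hrb : ∀ x ∈ Icc 0 ℓ, 0 ≤ r x)
    (hκb : ∀ x ∈ Icc 0 ℓ, κ₀ ≤ κ x) (hℓ : 0 ≤ ℓ) (ht : t ∈ Icc 0 T) :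
    2 * ∫ x in 0..ℓ, F x t * sol.ut x t - μ x * sol.ut x t ^ 2 - κ x * sol.uxxt x t ^ 2
      ≤ ρ₀⁻¹ * sol.energy t + (∫ x in 0..ℓ, F x t ^ 2)
        - 2 * κ₀ * ∫ x in 0..ℓ, sol.uxxt x t ^ 2 := by
  have := sol.cont_ux.uncurry_right t ht
  have := sol.cont_uxx.uncurry_right t ht
  have := sol.cont_ut.uncurry_right t ht
  have := sol.cont_uxxt.uncurry_right t ht
  have := hF.uncurry_right t ht
  have hpoint : ∀ x ∈ Icc 0 ℓ,
      2 * (F x t * sol.ut x t - μ x * sol.ut x t ^ 2 - κ x * sol.uxxt x t ^ 2)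
        ≤ ρ₀⁻¹ * (ρA x * sol.ut x t ^ 2 + Tr x * sol.ux x t ^ 2 + r x * sol.uxx x t ^ 2)
          + F x t ^ 2 - 2 * κ₀ * sol.uxxt x t ^ 2 := fun x hx => by
    have hkin : sol.ut x t ^ 2 ≤ ρ₀⁻¹ * ρA x * sol.ut x t ^ 2 :=
      le_mul_of_one_le_left (sq_nonneg _) ((one_le_inv_mul₀ hρ₀).2 (hρAb x hx))
    have hpot : 0 ≤ ρ₀⁻¹ * (Tr x * sol.ux x t ^ 2 + r x * sol.uxx x t ^ 2) := by
      have := hTrb x hx; have := hrb x hx; positivity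
    nlinarith [sq_nonneg (F x t - sol.ut x t), mul_nonneg (hμb x hx) (sq_nonneg (sol.ut x t)),
      mul_le_mul_of_nonneg_right (hκb x hx) (sq_nonneg (sol.uxxt x t))]
  have hint : ∀ {g : ℝ → ℝ}, ContinuousOn g (Icc 0 ℓ) → IntervalIntegrable g volume 0 ℓ :=
    fun hg => hg.intervalIntegrable_of_Icc hℓ
  calc _ = ∫ x in 0..ℓ,
        2 * (F x t * sol.ut x t - μ x * sol.ut x t ^ 2 - κ x * sol.uxxt x t ^ 2) :=
        (intervalIntegral.integral_const_mul _ _).symm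
    _ ≤ ∫ x in 0..ℓ,
        ρ₀⁻¹ * (ρA x * sol.ut x t ^ 2 + Tr x * sol.ux x t ^ 2 + r x * sol.uxx x t ^ 2)
          + F x t ^ 2 - 2 * κ₀ * sol.uxxt x t ^ 2 :=
        integral_mono_on hℓ (hint (by fun_prop)) (hint (by fun_prop)) hpoint
    _ = _ := by
      rw [intervalIntegral.integral_sub (hint (by fun_prop)) (hint (by fun_prop)),
        intervalIntegral.integral_add (hint (by fun_prop)) (hint (by fun_prop)),
        intervalIntegral.integral_const_mul, intervalIntegral.integral_const_mul, energy]

theorem energy_add_integral_dissipation_le {ρ₀ κ₀ : ℝ} (hρ₀ : 0 < ρ₀)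
    (hρA : ContinuousOn ρA (Icc 0 ℓ)) (hμ : ContinuousOn μ (Icc 0 ℓ))
    (hTr : ContinuousOn Tr (Icc 0 ℓ)) (hr : ContinuousOn r (Icc 0 ℓ))
    (hκ : ContinuousOn κ (Icc 0 ℓ))
    (hF : ContinuousOn (fun p : ℝ × ℝ => F p.1 p.2) (Icc 0 ℓ ×ˢ Icc 0 T))
    (hρAb : ∀ x ∈ Icc 0 ℓ, ρ₀ ≤ ρA x) (hμb : ∀ x ∈ Icc 0 ℓ, 0 ≤ μ x)
    (hTrb : ∀ x ∈ Icc 0 ℓ, 0 ≤ Tr x) (hrb : ∀ x ∈ Icc 0 ℓ, 0 ≤ r x)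
    (hκb : ∀ x ∈ Icc 0 ℓ, κ₀ ≤ κ x) (hℓ : 0 ≤ ℓ) (ht : t ∈ Icc 0 T) :
    sol.energy t + 2 * κ₀ * ∫ s in 0..t, ∫ x in 0..ℓ, sol.uxxt x s ^ 2
      ≤ ∫ s in 0..t, ρ₀⁻¹ * sol.energy s + ∫ x in 0..ℓ, F x s ^ 2 := by
  have hsub : Icc 0 t ⊆ Icc 0 T := Icc_subset_Icc le_rfl ht.2
  have hint : ∀ {g : ℝ → ℝ → ℝ},
      ContinuousOn (fun p : ℝ × ℝ => g p.1 p.2) (Icc 0 ℓ ×ˢ Icc 0 T) →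
      IntervalIntegrable (fun s => ∫ x in 0..ℓ, g x s) volume 0 t := fun hg =>
    ((continuousOn_intervalIntegral_of_continuousOn_prod hℓ isCompact_Icc hg).mono
      hsub).intervalIntegrable_of_Icc ht.1
  have hE := (sol.continuousOn_energy hρA hTr hr hℓ).mono hsub
  have hD : IntervalIntegrable (fun s => 2 * ∫ x in 0..ℓ,
      F x s * sol.ut x s - μ x * sol.ut x s ^ 2 - κ x * sol.uxxt x s ^ 2) volume 0 t :=
    (hint (by fun_prop (disch := exact mapsTo_fst_prod))).const_mul 2
  have hJ : IntervalIntegrable (fun s => ∫ x in 0..ℓ, sol.uxxt x s ^ 2) volume 0 t :=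
    hint (by fun_prop)
  have hftc : sol.energy t = ∫ s in 0..t, 2 * ∫ x in 0..ℓ,
      F x s * sol.ut x s - μ x * sol.ut x s ^ 2 - κ x * sol.uxxt x s ^ 2 := by
    rw [integral_eq_sub_of_hasDerivAt_of_le ht.1 hE (fun s hs => sol.hasDerivAt_energy hρA hμ hTr
      hr hκ hF hℓ ⟨hs.1, hs.2.trans_le ht.2⟩) hD, sol.energy_zero hℓ (ht.1.trans ht.2), sub_zero]
  have hq : IntervalIntegrable (fun s => ρ₀⁻¹ * sol.energy s + ∫ x in 0..ℓ, F x s ^ 2)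
      volume 0 t :=
    ((hE.intervalIntegrable_of_Icc ht.1).const_mul ρ₀⁻¹).add (hint (by fun_prop))
  have hbound := integral_mono_on ht.1 hD (hq.sub (hJ.const_mul (2 * κ₀)))
    fun s hs => sol.two_mul_integral_power_sub_dissipation_le hρ₀ hρA hμ hTr hr hκ hF hρAb hμb
      hTrb hrb hκb hℓ (hsub hs)
  rw [intervalIntegral.integral_sub hq (hJ.const_mul _),
    intervalIntegral.integral_const_mul (2 * κ₀)] at hbound
  linarith

end ForwardSol

/-- **Kelvin–Voigt dissipation estimate of Theorem 1.** -/
theorem kelvin_voigt_dissipation_estimate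
    (ℓ T ρ₀ r₀ κ₀ : ℝ) (hℓ : 0 < ℓ) (hT : 0 < T)
    (hρ₀ : 0 < ρ₀) (hr₀ : 0 < r₀) (hκ₀ : 0 < κ₀)
    (ρA μ Tr r κ : ℝ → ℝ) (F : ℝ → ℝ → ℝ)
    (hρA : ContDiffOn ℝ (⊤ : ℕ∞) ρA (Icc 0 ℓ))
    (hμ : ContDiffOn ℝ (⊤ : ℕ∞) μ (Icc 0 ℓ))
    (hTr : ContDiffOn ℝ (⊤ : ℕ∞) Tr (Icc 0 ℓ))
    (hr : ContDiffOn ℝ (⊤ : ℕ∞) r (Icc 0 ℓ))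
    (hκ : ContDiffOn ℝ (⊤ : ℕ∞) κ (Icc 0 ℓ))
    (hρAb : ∀ x ∈ Icc (0:ℝ) ℓ, ρ₀ ≤ ρA x)
    (hμb : ∀ x ∈ Icc (0:ℝ) ℓ, 0 ≤ μ x)
    (hTrb : ∀ x ∈ Icc (0:ℝ) ℓ, 0 ≤ Tr x)
    (hrb : ∀ x ∈ Icc (0:ℝ) ℓ, r₀ ≤ r x)
    (hκb : ∀ x ∈ Icc (0:ℝ) ℓ, κ₀ ≤ κ x)
    (hF : ContinuousOn (fun p : ℝ × ℝ => F p.1 p.2) (Icc 0 ℓ ×ˢ Icc 0 T))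
    (sol : ForwardSol ℓ T ρA μ Tr r κ F) :
    2 * κ₀ * (∫ t in (0:ℝ)..T, ∫ x in (0:ℝ)..ℓ, (sol.uxxt x t) ^ 2)
      ≤ Real.exp (T / ρ₀) * (∫ t in (0:ℝ)..T, ∫ x in (0:ℝ)..ℓ, (F x t) ^ 2) := by
  have hr₀b : ∀ x ∈ Icc 0 ℓ, 0 ≤ r x := fun x hx => hr₀.le.trans (hrb x hx)
  have henergy := fun t (ht : t ∈ Icc 0 T) => sol.energy_add_integral_dissipation_le hρ₀
    hρA.continuousOn hμ.continuousOn hTr.continuousOn hr.continuousOn hκ.continuousOn hF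
    hρAb hμb hTrb hr₀b hκb hℓ.le ht
  have hJ : ∀ t ∈ Icc 0 T, 0 ≤ ∫ s in 0..t, ∫ x in 0..ℓ, sol.uxxt x s ^ 2 := fun t ht =>
    integral_nonneg ht.1 fun s _ => integral_nonneg hℓ.le fun x _ => sq_nonneg _
  have hf : ContinuousOn (fun t => ∫ x in 0..ℓ, F x t ^ 2) (Icc 0 T) :=
    continuousOn_intervalIntegral_of_continuousOn_prod hℓ.le isCompact_Icc (by fun_prop)
  have hgronwall := integral_le_exp_mul_integral_of_le_integral (inv_nonneg.2 hρ₀.le) hT.le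
    (sol.continuousOn_energy hρA.continuousOn hTr.continuousOn hr.continuousOn hℓ.le) hf
    (fun t _ => integral_nonneg hℓ.le fun x _ => sq_nonneg _)
    (fun t ht => by linarith [henergy t ht, mul_nonneg (by positivity : 0 ≤ 2 * κ₀) (hJ t ht)])
  have hET := sol.energy_nonneg (fun x hx => hρ₀.le.trans (hρAb x hx)) hTrb hr₀b hℓ.le (t := T)
  rw [div_eq_inv_mul]
  linarith [henergy T ⟨hT.le, le_rfl⟩]
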